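/- arXiv:math/0402421 — 3 statements merged into one kernel-verified Lean document; each statement's English description precedes it below -/
import Mathlib

section
/- Let (g_n)_{n∈ℕ} be a family of polynomials g_n ∈ ℂ[ν] such that for every n ≥ 1 the polynomial Σ_{s=1}^{n} C(n,s)·(−μ)^s·g_{n−s}(ν) ∈ ℂ[μ,ν] is divisible by ν. Then for every n ∈ ℕ, g_n is divisible by ν in ℂ[ν]. -/
open Finset Polynomial

theorem coeff_one_sum_choose_mul_neg_X_pow_mul_C {R : Type*} [CommRing R] (g : ℕ → R) {n : ℕ}
    (hn : 1 ≤ n) :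
    (∑ s ∈ Icc 1 n, (n.choose s : R[X]) * (-X) ^ s * C (g (n - s))).coeff 1 = -(n * g (n - 1)) := by
  have hterm : ∀ s, (n.choose s : R[X]) * (-X) ^ s * C (g (n - s))
      = C ((-1) ^ s * n.choose s * g (n - s)) * X ^ s := by
    intro s; simp only [neg_pow (X : R[X]), C_mul, C_pow, C_neg, C_1, map_natCast]; ring
  simp only [hterm, finsetSum_coeff, coeff_C_mul_X_pow]
  rw [Finset.sum_ite_eq _ _ _, if_pos (mem_Icc.2 ⟨le_rfl, hn⟩)]
  simp

/-- If Σ_{s=1}^n C(n,s)(−μ)^s g_{n−s}(ν) is divisible by ν in ℂ[μ,ν] for every n ≥ 1,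
    then every g_n is divisible by ν.  ℂ[μ,ν] is modelled as (ℂ[ν])[μ]. -/
theorem stmt_10 (g : ℕ → Polynomial ℂ)
    (hg : ∀ n : ℕ, 1 ≤ n →
      (C (X : Polynomial ℂ) : Polynomial (Polynomial ℂ)) ∣
        ∑ s ∈ Icc 1 n, (n.choose s : Polynomial (Polynomial ℂ)) * (-X) ^ s * C (g (n - s))) :
    ∀ n : ℕ, (X : Polynomial ℂ) ∣ g n := by
  intro n
  have hcoeff := (C_dvd_iff_dvd_coeff _ _).1 (hg (n + 1) (Nat.le_add_left 1 n)) 1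
  rw [coeff_one_sum_choose_mul_neg_X_pow_mul_C g (Nat.le_add_left 1 n), Nat.add_sub_cancel, dvd_neg]
    at hcoeff
  have hunit : IsUnit ((n + 1 : ℕ) : ℂ[X]) := by
    rw [← map_natCast C]
    exact (Nat.cast_ne_zero.2 n.succ_ne_zero).isUnit.map C
  exact hunit.dvd_mul_left.1 hcoeff
end

section
/- Let γ(λ₁,λ₂) ∈ ℂ[λ₁,λ₂] be a polynomial such that λ₁·γ(λ₂,λ₃) − λ₂·γ(λ₁,λ₃) + λ₃·γ(λ₁,λ₂) = 0 as a polynomial identity in ℂ[λ₁,λ₂,λ₃]. Then γ(λ₁,λ₂) = λ₁·g(λ₂) − λ₂·g(λ₁), where g(λ) := γ(1,λ) ∈ ℂ[λ]. -/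
open MvPolynomial

lemma aux_comp {A : Type*} [CommRing A] [Algebra ℂ A] (f : Fin 2 → A)
    (g : Fin 2 → MvPolynomial (Fin 2) ℂ) (p : MvPolynomial (Fin 2) ℂ) :
    aeval f (aeval g p) = aeval (fun i => aeval f (g i)) p := by
  rw [← AlgHom.comp_apply, comp_aeval]

lemma aux_comp3 {A : Type*} [CommRing A] [Algebra ℂ A] (f : Fin 3 → A)
    (g : Fin 2 → MvPolynomial (Fin 3) ℂ) (p : MvPolynomial (Fin 2) ℂ) :
    aeval f (aeval g p) = aeval (fun i => aeval f (g i)) p := by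
  rw [← AlgHom.comp_apply, comp_aeval]

lemma aux_poly (a : MvPolynomial (Fin 2) ℂ) (p : MvPolynomial (Fin 2) ℂ) :
    Polynomial.aeval a (aeval ![(1 : Polynomial ℂ), Polynomial.X] p)
      = aeval ![1, a] p := by
  rw [← AlgHom.comp_apply, comp_aeval]
  have : (fun i => Polynomial.aeval a (![(1 : Polynomial ℂ), Polynomial.X] i)) = ![1, a] := by
    funext i; fin_cases i <;> simp
  rw [this]

/-- If λ₁γ(λ₂,λ₃) − λ₂γ(λ₁,λ₃) + λ₃γ(λ₁,λ₂) = 0 then γ(λ₁,λ₂) = λ₁g(λ₂) − λ₂g(λ₁)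
    where g(λ) = γ(1,λ). -/
theorem stmt_11 (γ : MvPolynomial (Fin 2) ℂ)
    (h : X 0 * (aeval ![(X 1 : MvPolynomial (Fin 3) ℂ), X 2] γ)
        - X 1 * (aeval ![(X 0 : MvPolynomial (Fin 3) ℂ), X 2] γ)
        + X 2 * (aeval ![(X 0 : MvPolynomial (Fin 3) ℂ), X 1] γ) = 0) :
    γ = X 0 * Polynomial.aeval (X 1 : MvPolynomial (Fin 2) ℂ)
            (aeval ![(1 : Polynomial ℂ), Polynomial.X] γ)
        - X 1 * Polynomial.aeval (X 0 : MvPolynomial (Fin 2) ℂ)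
            (aeval ![(1 : Polynomial ℂ), Polynomial.X] γ) := by
  have h2 := congrArg (aeval ![(1 : MvPolynomial (Fin 2) ℂ), X 0, X 1]) h
  simp only [map_add, map_sub, map_mul, aux_comp3, map_zero, aeval_X] at h2
  rw [aux_poly, aux_poly]
  have e1 : (fun i => aeval ![(1 : MvPolynomial (Fin 2) ℂ), X 0, X 1] ((![X 1, X 2] : Fin 2 → MvPolynomial (Fin 3) ℂ) i))
      = fun i : Fin 2 => X i := by
    funext i; fin_cases i <;> simp
  have e2 : (fun i => aeval ![(1 : MvPolynomial (Fin 2) ℂ), X 0, X 1] ((![X 0, X 2] : Fin 2 → MvPolynomial (Fin 3) ℂ) i))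
      = ![1, X 1] := by
    funext i; fin_cases i <;> simp
  have e3 : (fun i => aeval ![(1 : MvPolynomial (Fin 2) ℂ), X 0, X 1] ((![X 0, X 1] : Fin 2 → MvPolynomial (Fin 3) ℂ) i))
      = ![1, X 0] := by
    funext i; fin_cases i <;> simp
  rw [e1, e2, e3] at h2
  simp only [Matrix.cons_val_zero, Matrix.cons_val_one, Matrix.head_cons, Matrix.cons_val_two, Matrix.tail_cons] at h2
  have : aeval (fun i : Fin 2 => (X i : MvPolynomial (Fin 2) ℂ)) γ = γ := by
    simp [aeval_X_left_apply]
  rw [this] at h2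
  linear_combination h2
end

section
/- Let γ ∈ ℂ[x₁,x₂,x₃] be a polynomial satisfying λ₁·γ(λ₂, λ₃, λ₁+λ₄) = λ₂·γ(λ₁, λ₃, λ₂+λ₄) as an identity in the four independent variables λ₁, λ₂, λ₃, λ₄. Suppose in addition that γ is skew-symmetric in its last two arguments, i.e. γ(x₁,x₂,x₃) = −γ(x₁,x₃,x₂). Then γ = 0. -/
/-!
Since `ℂ` is infinite it suffices to show that the polynomial function of `γ` vanishes.
Evaluating the identity at `λ₁ = 1` gives `γ(x, y, z) = x · γ(1, y, x + z - 1)`, so `γ` is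
determined by its values on `x₁ = 1`. Skew-symmetry makes `γ` vanish where `x₂ = x₃`; applying
the normalisation there shows `γ(1, c, w) = 0` whenever `w ≠ c - 1`, and skew-symmetry once more
covers the remaining line `w = c - 1`.
-/

open MvPolynomial

theorem MvPolynomial.eval_aeval {σ τ R : Type*} [CommSemiring R] (x : τ → R)
    (g : σ → MvPolynomial τ R) (p : MvPolynomial σ R) :
    eval x (aeval g p) = eval (fun i => eval x (g i)) p := by
  rw [aeval_eq_bind₁]
  exact eval₂Hom_bind₁ _ _ _ _

section Antisymm

variable {R : Type*} [CommRing R] [IsDomain R] [NeZero (2 : R)] {f : R → R → R → R}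

theorem apply_self_eq_zero_of_antisymm (hskew : ∀ x y z, f x y z = -f x z y) (x y : R) :
    f x y y = 0 := by
  have h : (2 : R) * f x y y = 0 := by linear_combination hskew x y y
  exact (mul_eq_zero.mp h).resolve_left two_ne_zero

theorem apply_eq_zero_of_mul_apply_eq_of_antisymm
    (hrel : ∀ a b c d, a * f b c (a + d) = b * f a c (b + d))
    (hskew : ∀ x y z, f x y z = -f x z y) (x y z : R) : f x y z = 0 := by
  have hnorm : ∀ x y z, f x y z = x * f 1 y (x + z - 1) := fun x y z => by
    have h := hrel 1 x y (z - 1)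
    rwa [one_mul, add_sub_cancel, ← add_sub_assoc] at h
  have hoff : ∀ c w, w ≠ c - 1 → f 1 c w = 0 := fun c w hw => by
    have h := hnorm (w - c + 1) c c
    rw [apply_self_eq_zero_of_antisymm hskew, show w - c + 1 + c - 1 = w by ring] at h
    exact (mul_eq_zero.mp h.symm).resolve_left fun h0 => hw (by linear_combination h0)
  have hone : ∀ c w, f 1 c w = 0 := fun c w => by
    by_cases hw : w = c - 1
    · have hc : c ≠ w - 1 := fun hc => two_ne_zero (α := R) (by linear_combination hw + hc)
      rw [hskew, hoff w c hc, neg_zero]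
    · exact hoff c w hw
  rw [hnorm, hone, mul_zero]

end Antisymm

/-- If λ₁·γ(λ₂,λ₃,λ₁+λ₄) = λ₂·γ(λ₁,λ₃,λ₂+λ₄) and γ is skew-symmetric in its last two
    arguments, then γ = 0. -/
theorem stmt_13 (γ : MvPolynomial (Fin 3) ℂ)
    (h : X 0 * (aeval ![(X 1 : MvPolynomial (Fin 4) ℂ), X 2, X 0 + X 3] γ)
        = X 1 * (aeval ![(X 0 : MvPolynomial (Fin 4) ℂ), X 2, X 1 + X 3] γ))
    (hskew : rename (Equiv.swap (1 : Fin 3) 2) γ = -γ) :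
    γ = 0 := by
  have hrel : ∀ a b c d : ℂ, a * eval ![b, c, a + d] γ = b * eval ![a, c, b + d] γ := by
    intro a b c d
    have h' := congrArg (eval ![a, b, c, d]) h
    simp only [map_mul, eval_aeval, eval_X] at h'
    convert h' using 4 <;> (try funext i; fin_cases i) <;> simp
  have hskew' : ∀ a b c : ℂ, eval ![a, b, c] γ = -eval ![a, c, b] γ := by
    intro a b c
    rw [← map_neg, ← hskew, eval_rename]
    congr 2
    funext i
    fin_cases i <;> rfl
  refine MvPolynomial.funext fun x => ?_
  rw [map_zero, ← FinVec.etaExpand_eq x]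
  exact apply_eq_zero_of_mul_apply_eq_of_antisymm hrel hskew' _ _ _
end
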